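/- Let a < b be real numbers, r ≥ 1 an integer, and f an r-times continuously differentiable function on [a,b]. Then there exists a polynomial p ∈ ℙ_{r−1} such that ‖f − p‖_{[a,b],∞} ≤ (2/r!)·((b−a)/4)^r·‖f^{(r)}‖_{[a,b],∞}. In particular, the best uniform approximation error E_{r−1}(f) = inf_{p∈ℙ_{r−1}} ‖f − p‖_{[a,b],∞} satisfies E_{r−1}(f) ≤ (2/r!)·((b−a)/4)^r·‖f^{(r)}‖_{[a,b],∞}. -/

import Mathlib

/-!
Interpolate `f` at the `r` zeros of the Chebyshev polynomial `T_r`, transported affinely to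
`[a, b]`. If a real function `g` vanishes at `r` points `tᵢ` and `ω y = ∏ (y - tᵢ)`, then Rolle's
theorem applied `r` times to `y ↦ g y * ω x - g x * ω y` gives `g x * r! = g⁽ʳ⁾ ξ * ω x`; a norming
functional reduces the complex-valued error `f - p` to this real case. For the Chebyshev nodes `ω`
is `2^(1-r) T_r` rescaled to `[a, b]`, so `|ω| ≤ 2 ((b - a) / 4)^r` there.
-/

open Polynomial Set

noncomputable section

def pEval (p : Polynomial ℂ) : ℝ → ℂ := fun x => p.eval (x : ℂ)

def supNorm (a b : ℝ) (f : ℝ → ℂ) : ℝ := ⨆ x : Icc a b, ‖f (x : ℝ)‖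

theorem Polynomial.iteratedDeriv_eval {𝕜 : Type*} [NontriviallyNormedField 𝕜] (p : 𝕜[X])
    (n : ℕ) : iteratedDeriv n (fun x => p.eval x) = fun x => (derivative^[n] p).eval x := by
  induction n with
  | zero => simp
  | succ n ih =>
    ext x
    rw [iteratedDeriv_succ, ih, Function.iterate_succ_apply', Polynomial.deriv]

theorem ContinuousLinearMap.iteratedDerivWithin_comp_left {𝕜 E F : Type*}
    [NontriviallyNormedField 𝕜] [NormedAddCommGroup E] [NormedSpace 𝕜 E] [NormedAddCommGroup F]
    [NormedSpace 𝕜 F] (ℓ : E →L[𝕜] F) {g : 𝕜 → E} {s : Set 𝕜} {n : ℕ} (hg : ContDiffOn 𝕜 n g s)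
    (hs : UniqueDiffOn 𝕜 s) {x : 𝕜} (hx : x ∈ s) :
    iteratedDerivWithin n (ℓ ∘ g) s x = ℓ (iteratedDerivWithin n g s x) := by
  simp only [iteratedDerivWithin_eq_iteratedFDerivWithin,
    ℓ.iteratedFDerivWithin_comp_left (hg x hx) hs hx le_rfl]
  rfl

theorem exists_finset_derivWithin_eq_zero {g : ℝ → ℝ} {a b : ℝ} (hg : ContinuousOn g (Icc a b))
    {s : Finset ℝ} (hs : ↑s ⊆ Icc a b) (hzero : ∀ x ∈ s, g x = 0) :
    ∃ t : Finset ℝ, ↑t ⊆ Icc a b ∧ s.card ≤ t.card + 1 ∧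
      ∀ z ∈ t, derivWithin g (Icc a b) z = 0 := by
  classical
  have hrolle : ∀ x ∈ s, ∀ y ∈ s, x < y → ∃ z ∈ Ioo x y, derivWithin g (Icc a b) z = 0 := by
    intro x hx y hy hxy
    obtain ⟨z, hz, hz0⟩ := exists_deriv_eq_zero hxy
      (hg.mono (Icc_subset_Icc (hs hx).1 (hs hy).2)) (by rw [hzero x hx, hzero y hy])
    refine ⟨z, hz, ?_⟩
    rwa [derivWithin_of_mem_nhds
      (Icc_mem_nhds ((hs hx).1.trans_lt hz.1) (hz.2.trans_le (hs hy).2))]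
  choose! c hc hc0 using hrolle
  refine ⟨((s ×ˢ s).filter fun q => q.1 < q.2).image fun q => c q.1 q.2, ?_, ?_, ?_⟩
  · intro z hz
    simp only [Finset.coe_image, Finset.coe_filter, Finset.mem_product, mem_image] at hz
    obtain ⟨⟨x, y⟩, ⟨⟨hx, hy⟩, hxy⟩, rfl⟩ := hz
    exact Ioo_subset_Icc_self.trans (Icc_subset_Icc (hs hx).1 (hs hy).2) (hc x hx y hy hxy)
  · refine Finset.card_le_of_interleaved fun x hx y hy hxy _ => ⟨c x y, ?_, hc x hx y hy hxy⟩
    exact Finset.mem_image.mpr ⟨(x, y), by simp [hx, hy, hxy], rfl⟩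
  · simp only [Finset.mem_image, Finset.mem_filter, Finset.mem_product]
    rintro _ ⟨⟨x, y⟩, ⟨⟨hx, hy⟩, hxy⟩, rfl⟩
    exact hc0 x hx y hy hxy

theorem exists_iteratedDerivWithin_eq_zero {a b : ℝ} (hab : a < b) {n : ℕ} {g : ℝ → ℝ}
    (hg : ContDiffOn ℝ n g (Icc a b)) {s : Finset ℝ} (hs : ↑s ⊆ Icc a b) (hcard : n < s.card)
    (hzero : ∀ x ∈ s, g x = 0) :
    ∃ ξ ∈ Icc a b, iteratedDerivWithin n g (Icc a b) ξ = 0 := by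
  induction n generalizing g s with
  | zero =>
    obtain ⟨x, hx⟩ := Finset.card_pos.mp hcard
    exact ⟨x, hs hx, by simpa using hzero x hx⟩
  | succ n ih =>
    obtain ⟨t, ht, hcard_t, hzero_t⟩ :=
      exists_finset_derivWithin_eq_zero hg.continuousOn hs hzero
    obtain ⟨ξ, hξ, hξ0⟩ := ih (hg.derivWithin (uniqueDiffOn_Icc hab) le_rfl) ht (by omega) hzero_t
    exact ⟨ξ, hξ, by rwa [iteratedDerivWithin_succ']⟩

theorem exists_mul_factorial_eq_iteratedDerivWithin_mul_prod {a b : ℝ} (hab : a < b) {n : ℕ}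
    {g : ℝ → ℝ} (hg : ContDiffOn ℝ n g (Icc a b)) {s : Finset ℝ} (hs : ↑s ⊆ Icc a b)
    (hcard : s.card = n) (hzero : ∀ t ∈ s, g t = 0) {x : ℝ} (hx : x ∈ Icc a b) :
    ∃ ξ ∈ Icc a b, g x * n.factorial = iteratedDerivWithin n g (Icc a b) ξ * ∏ t ∈ s, (x - t) := by
  classical
  by_cases hxs : x ∈ s
  · exact ⟨x, hx, by rw [hzero x hxs, Finset.prod_eq_zero hxs (sub_self x)]; ring⟩
  set W : ℝ[X] := ∏ t ∈ s, (X - C t)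
  have hW : ∀ y, W.eval y = ∏ t ∈ s, (y - t) := fun y => by simp [W, eval_prod]
  have hWn : derivative^[n] W = n.factorial := by
    rw [iterate_derivative_prod_X_sub_C hcard.ge]
    simp [hcard]
  -- Cauchy's auxiliary function: it vanishes on `insert x s`.
  set F : ℝ → ℝ := (fun y => g y * W.eval x) - fun y => (C (g x) * W).eval y
  have hpoly : ContDiff ℝ n fun y => (C (g x) * W).eval y := by
    simpa using (C (g x) * W).contDiff_aeval (𝕜 := ℝ) n
  have hF : ContDiffOn ℝ n F (Icc a b) := (hg.mul contDiffOn_const).sub hpoly.contDiffOn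
  have hF_zero : ∀ y ∈ insert x s, F y = 0 := by
    intro y hy
    rcases Finset.mem_insert.mp hy with rfl | hy
    · simp [F]
    · simp [F, hzero y hy, hW, Finset.prod_eq_zero hy (sub_self y)]
  obtain ⟨ξ, hξ, hξ0⟩ := exists_iteratedDerivWithin_eq_zero hab hF
    (Finset.coe_insert x s ▸ insert_subset hx hs) (by rw [Finset.card_insert_of_notMem hxs]; omega)
    hF_zero
  have hderiv : iteratedDerivWithin n F (Icc a b) ξ =
      iteratedDerivWithin n g (Icc a b) ξ * W.eval x - g x * n.factorial := by
    have hu := uniqueDiffOn_Icc hab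
    rw [iteratedDerivWithin_sub hξ hu ((hg ξ hξ).mul contDiffWithinAt_const)
        hpoly.contDiffWithinAt, iteratedDerivWithin_mul_const_field,
      iteratedDerivWithin_eq_iteratedDeriv hu hpoly.contDiffAt hξ,
      Polynomial.iteratedDeriv_eval, iterate_derivative_C_mul, hWn]
    simp
  refine ⟨ξ, hξ, ?_⟩
  rw [← hW]
  linarith

theorem norm_mul_factorial_le_of_forall_eq_zero {E : Type*} [NormedAddCommGroup E]
    [NormedSpace ℝ E] {a b : ℝ} (hab : a < b) {n : ℕ} {g : ℝ → E}
    (hg : ContDiffOn ℝ n g (Icc a b)) {s : Finset ℝ} (hs : ↑s ⊆ Icc a b) (hcard : s.card = n)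
    (hzero : ∀ t ∈ s, g t = 0) {M : ℝ}
    (hM : ∀ y ∈ Icc a b, ‖iteratedDerivWithin n g (Icc a b) y‖ ≤ M) {x : ℝ} (hx : x ∈ Icc a b) :
    ‖g x‖ * n.factorial ≤ M * |∏ t ∈ s, (x - t)| := by
  obtain ⟨ℓ, hℓ, hℓx⟩ := exists_dual_vector'' ℝ (g x)
  obtain ⟨ξ, hξ, hrem⟩ := exists_mul_factorial_eq_iteratedDerivWithin_mul_prod hab
    (ℓ.contDiff.comp_contDiffOn hg) hs hcard (fun t ht => by simp [hzero t ht]) hx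
  rw [ℓ.iteratedDerivWithin_comp_left hg (uniqueDiffOn_Icc hab) hξ, Function.comp_apply,
    hℓx, RCLike.ofReal_real_eq_id, id] at hrem
  have hℓξ : |ℓ (iteratedDerivWithin n g (Icc a b) ξ)| ≤ M :=
    calc |ℓ (iteratedDerivWithin n g (Icc a b) ξ)|
        ≤ ‖ℓ‖ * ‖iteratedDerivWithin n g (Icc a b) ξ‖ := ℓ.le_opNorm _
      _ ≤ 1 * M := mul_le_mul hℓ (hM ξ hξ) (norm_nonneg _) zero_le_one
      _ = M := one_mul M
  calc ‖g x‖ * n.factorial = |ℓ (iteratedDerivWithin n g (Icc a b) ξ)| * |∏ t ∈ s, (x - t)| := by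
        rw [← abs_mul, ← hrem, abs_of_nonneg (by positivity)]
    _ ≤ M * |∏ t ∈ s, (x - t)| := mul_le_mul_of_nonneg_right hℓξ (abs_nonneg _)

namespace Polynomial.Chebyshev

theorem nodup_roots_T_real (n : ℕ) : (T ℝ n).roots.Nodup := by
  rw [roots_T_real]
  exact Finset.nodup _

theorem card_roots_T_real (n : ℕ) : Multiset.card (T ℝ n).roots = n := by
  rw [roots_T_real, Finset.card_val, Finset.card_image_of_injOn, Finset.card_range]
  exact (Finset.range n).nodup_map_iff_injOn.mp (roots_T_real_nodup n)

theorem card_roots_toFinset_T_real (n : ℕ) : (T ℝ n).roots.toFinset.card = n := by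
  rw [Multiset.toFinset_card_of_nodup (nodup_roots_T_real n), card_roots_T_real]

theorem abs_le_one_of_mem_roots_T_real {n : ℕ} {c : ℝ} (hc : c ∈ (T ℝ n).roots) : |c| ≤ 1 := by
  rw [roots_T_real, Finset.mem_val, Finset.mem_image] at hc
  obtain ⟨k, -, rfl⟩ := hc
  exact Real.abs_cos_le_one _

theorem eval_T_real_eq_prod (n : ℕ) (v : ℝ) :
    (T ℝ n).eval v = 2 ^ (n - 1) * ∏ c ∈ (T ℝ n).roots.toFinset, (v - c) := by
  conv_lhs =>
    rw [← C_leadingCoeff_mul_prod_multiset_X_sub_C (p := T ℝ n) (by simp [card_roots_T_real])]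
  rw [leadingCoeff_T, eval_mul, eval_C, eval_multiset_prod, Finset.prod_eq_multiset_prod,
    Multiset.toFinset_val, (nodup_roots_T_real n).dedup, Multiset.map_map]
  simp

theorem abs_prod_sub_roots_T_real_le (n : ℕ) {v : ℝ} (hv : |v| ≤ 1) :
    2 ^ (n - 1) * |∏ c ∈ (T ℝ n).roots.toFinset, (v - c)| ≤ 1 := by
  have hT := abs_eval_T_real_le_one n hv
  rwa [eval_T_real_eq_prod, abs_mul, abs_of_pos (by positivity)] at hT

end Polynomial.Chebyshev

def chebyshevNodes (a b : ℝ) (n : ℕ) : Finset ℝ :=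
  (Chebyshev.T ℝ n).roots.toFinset.image fun c => (a + b) / 2 + (b - a) / 2 * c

theorem card_chebyshevNodes {a b : ℝ} (hab : a ≠ b) (n : ℕ) : (chebyshevNodes a b n).card = n := by
  have hh : (b - a) / 2 ≠ 0 := div_ne_zero (sub_ne_zero.mpr hab.symm) two_ne_zero
  rw [chebyshevNodes, Finset.card_image_of_injective _ fun c d hcd =>
      mul_left_cancel₀ hh (add_left_cancel hcd), Chebyshev.card_roots_toFinset_T_real]

theorem chebyshevNodes_subset_Icc {a b : ℝ} (hab : a ≤ b) (n : ℕ) :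
    ↑(chebyshevNodes a b n) ⊆ Icc a b := by
  intro t ht
  simp only [chebyshevNodes, Finset.coe_image, mem_image, Finset.mem_coe,
    Multiset.mem_toFinset] at ht
  obtain ⟨c, hc, rfl⟩ := ht
  obtain ⟨hc₁, hc₂⟩ := abs_le.mp (Chebyshev.abs_le_one_of_mem_roots_T_real hc)
  constructor <;> nlinarith

theorem abs_prod_sub_chebyshevNodes_le {a b : ℝ} (hab : a < b) (n : ℕ) {x : ℝ}
    (hx : x ∈ Icc a b) : |∏ t ∈ chebyshevNodes a b n, (x - t)| ≤ 2 * ((b - a) / 4) ^ n := by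
  set h := (b - a) / 2 with h_def
  set v := (x - (a + b) / 2) / h
  have hh : 0 < h := by linarith
  have hv : |v| ≤ 1 := by
    rw [abs_le, le_div_iff₀ hh, div_le_iff₀ hh]
    constructor <;> linarith [hx.1, hx.2]
  have hprod : ∏ t ∈ chebyshevNodes a b n, (x - t) =
      h ^ n * ∏ c ∈ (Chebyshev.T ℝ n).roots.toFinset, (v - c) := by
    rw [chebyshevNodes, Finset.prod_image fun c _ d _ hcd =>
        mul_left_cancel₀ hh.ne' (add_left_cancel hcd)]
    have hfactor : ∀ c, x - ((a + b) / 2 + h * c) = h * (v - c) := fun c => by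
      simp only [v]
      field_simp
      ring
    rw [Finset.prod_congr rfl fun c _ => hfactor c, Finset.prod_mul_distrib, Finset.prod_const,
      Chebyshev.card_roots_toFinset_T_real]
  have hcheb : |∏ c ∈ (Chebyshev.T ℝ n).roots.toFinset, (v - c)| ≤ 2 / 2 ^ n := by
    have h2 : (2 : ℝ) ^ n ≤ 2 * 2 ^ (n - 1) := by
      rw [← pow_succ']
      exact pow_le_pow_right₀ one_le_two (by omega)
    rw [le_div_iff₀ (by positivity)]
    nlinarith [Chebyshev.abs_prod_sub_roots_T_real_le n hv, abs_nonneg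
      (∏ c ∈ (Chebyshev.T ℝ n).roots.toFinset, (v - c))]
  calc |∏ t ∈ chebyshevNodes a b n, (x - t)|
      = h ^ n * |∏ c ∈ (Chebyshev.T ℝ n).roots.toFinset, (v - c)| := by
        rw [hprod, abs_mul, abs_of_pos (pow_pos hh n)]
    _ ≤ h ^ n * (2 / 2 ^ n) := by gcongr
    _ = 2 * ((b - a) / 4) ^ n := by
        rw [h_def, show (b - a) / 2 = 2 * ((b - a) / 4) by ring, mul_pow]
        field_simp

theorem contDiff_pEval (p : ℂ[X]) (n : WithTop ℕ∞) : ContDiff ℝ n (pEval p) :=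
  ((p.contDiff_aeval (𝕜 := ℂ) n).restrict_scalars ℝ).comp Complex.ofRealCLM.contDiff

theorem iteratedDeriv_pEval (p : ℂ[X]) (n : ℕ) :
    iteratedDeriv n (pEval p) = pEval (derivative^[n] p) := by
  induction n with
  | zero => rfl
  | succ n ih =>
    ext x
    rw [iteratedDeriv_succ, ih, Function.iterate_succ_apply']
    exact ((derivative^[n] p).hasDerivAt (x : ℂ)).comp_ofReal.deriv

theorem iteratedDerivWithin_sub_pEval {n : ℕ} {f : ℝ → ℂ} {s : Set ℝ} {x : ℝ}
    (hf : ContDiffWithinAt ℝ n f s x) (hs : UniqueDiffOn ℝ s) (hx : x ∈ s) {p : ℂ[X]}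
    (hp : p.degree < n) :
    iteratedDerivWithin n (f - pEval p) s x = iteratedDerivWithin n f s x := by
  rw [iteratedDerivWithin_sub hx hs hf (contDiff_pEval p n).contDiffWithinAt,
    iteratedDerivWithin_eq_iteratedDeriv hs (contDiff_pEval p n).contDiffAt hx,
    iteratedDeriv_pEval, iterate_derivative_eq_zero_of_degree_lt hp]
  simp [pEval]

theorem supNorm_nonneg (a b : ℝ) (g : ℝ → ℂ) : 0 ≤ supNorm a b g :=
  Real.iSup_nonneg fun _ => norm_nonneg _

theorem norm_le_supNorm {a b : ℝ} {g : ℝ → ℂ} (hg : ContinuousOn g (Icc a b)) {x : ℝ}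
    (hx : x ∈ Icc a b) : ‖g x‖ ≤ supNorm a b g := by
  refine le_ciSup (f := fun y : Icc a b => ‖g y‖) ?_ ⟨x, hx⟩
  refine (isCompact_Icc.bddAbove_image hg.norm).mono ?_
  rintro _ ⟨y, rfl⟩
  exact ⟨y, y.2, rfl⟩

theorem supNorm_le {a b : ℝ} (hab : a ≤ b) {g : ℝ → ℂ} {C : ℝ} (h : ∀ x ∈ Icc a b, ‖g x‖ ≤ C) :
    supNorm a b g ≤ C :=
  have : Nonempty (Icc a b) := (nonempty_Icc.mpr hab).to_subtype
  ciSup_le fun x => h x x.2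

theorem stmt_13_general
    (a b : ℝ) (hab : a < b) (r : ℕ)
    (f : ℝ → ℂ) (hf : ContDiffOn ℝ r f (Icc a b)) :
    (∃ p : Polynomial ℂ, p.natDegree ≤ r - 1 ∧
      ∀ x ∈ Icc a b, ‖f x - p.eval (x : ℂ)‖ ≤
        (2 / (r.factorial : ℝ)) * ((b - a) / 4) ^ r *
          supNorm a b (iteratedDerivWithin r f (Icc a b)))
    ∧ sInf {e : ℝ | ∃ p : Polynomial ℂ, p.natDegree ≤ r - 1 ∧
        e = supNorm a b (fun x => f x - p.eval (x : ℂ))} ≤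
      (2 / (r.factorial : ℝ)) * ((b - a) / 4) ^ r *
        supNorm a b (iteratedDerivWithin r f (Icc a b)) := by
  set M := supNorm a b (iteratedDerivWithin r f (Icc a b))
  set S := chebyshevNodes a b r
  have hS : S.card = r := card_chebyshevNodes hab.ne r
  have hinj : InjOn ((↑) : ℝ → ℂ) S := Complex.ofReal_injective.injOn
  set p := Lagrange.interpolate S (↑) f
  have hp_deg : p.degree < r := hS ▸ Lagrange.degree_interpolate_lt f hinj
  have hp_natDeg : p.natDegree ≤ r - 1 :=
    natDegree_le_of_degree_le (hS ▸ Lagrange.degree_interpolate_le f hinj)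
  have hu := uniqueDiffOn_Icc hab
  have hM : ∀ y ∈ Icc a b, ‖iteratedDerivWithin r (f - pEval p) (Icc a b) y‖ ≤ M :=
    fun y hy => by
      rw [iteratedDerivWithin_sub_pEval (hf y hy) hu hy hp_deg]
      exact norm_le_supNorm (hf.continuousOn_iteratedDerivWithin le_rfl hu) hy
  have hbound : ∀ x ∈ Icc a b,
      ‖f x - p.eval (x : ℂ)‖ ≤ 2 / r.factorial * ((b - a) / 4) ^ r * M := by
    intro x hx
    have herr := norm_mul_factorial_le_of_forall_eq_zero hab
      (hf.sub (contDiff_pEval p r).contDiffOn) (chebyshevNodes_subset_Icc hab.le r) hS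
      (fun t ht => sub_eq_zero.mpr (Lagrange.eval_interpolate_at_node f hinj ht).symm) hM hx
    rw [div_mul_eq_mul_div, div_mul_eq_mul_div, le_div_iff₀ (by positivity)]
    calc ‖f x - p.eval (x : ℂ)‖ * r.factorial ≤ M * |∏ t ∈ S, (x - t)| := herr
      _ ≤ M * (2 * ((b - a) / 4) ^ r) :=
        mul_le_mul_of_nonneg_left (abs_prod_sub_chebyshevNodes_le hab r hx)
          (supNorm_nonneg _ _ _)
      _ = 2 * ((b - a) / 4) ^ r * M := mul_comm _ _
  refine ⟨⟨p, hp_natDeg, hbound⟩, csInf_le_of_le ⟨0, ?_⟩ ⟨p, hp_natDeg, rfl⟩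
    (supNorm_le hab.le hbound)⟩
  rintro _ ⟨q, -, rfl⟩
  exact supNorm_nonneg _ _ _

/-- **A lemma on best approximation** (Lemma 4.3): if `f ∈ C^r([a,b])`, then there is a
polynomial `p` of degree at most `r-1` with
`‖f - p‖_{[a,b],∞} ≤ (2/r!)·((b-a)/4)^r·‖f⁽ʳ⁾‖_{[a,b],∞}`; in particular the best uniform
approximation error `E_{r-1}(f)` is bounded by the same quantity. -/
theorem stmt_13
    (a b : ℝ) (hab : a < b) (r : ℕ) (hr : 1 ≤ r)
    (f : ℝ → ℂ) (hf : ContDiffOn ℝ r f (Icc a b)) :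
    (∃ p : Polynomial ℂ, p.natDegree ≤ r - 1 ∧
      ∀ x ∈ Icc a b, ‖f x - p.eval (x : ℂ)‖ ≤
        (2 / (r.factorial : ℝ)) * ((b - a) / 4) ^ r *
          supNorm a b (iteratedDerivWithin r f (Icc a b)))
    ∧ sInf {e : ℝ | ∃ p : Polynomial ℂ, p.natDegree ≤ r - 1 ∧
        e = supNorm a b (fun x => f x - p.eval (x : ℂ))} ≤
      (2 / (r.factorial : ℝ)) * ((b - a) / 4) ^ r *
        supNorm a b (iteratedDerivWithin r f (Icc a b)) :=
  stmt_13_general a b hab r f hf
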